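/- For 1 ≤ p ≤ n−1, the least cardinality of a set A ⊆ {α ∈ IC_n : |im α| = p} such that every element of IC_n of height p is a finite product of elements of A equals C(n, p) + (n−1)·C(n−2, p−1). (This number is the rank of the Rees quotient RIC_n(p) = K(n,p)/K(n,p−1), where K(n,p) = {α ∈ IC_n : |im α| ≤ p}.) -/

import Mathlib

open scoped Classical

namespace ICCatalan

/-- Partial injective transformations on `Fin n` (representing the chain `[n] = {1,…,n}`). -/
abbrev PT (n : ℕ) := Fin n ≃. Fin n

/-- Composition (left-to-right, `x(αβ) = (xα)β`) makes `PT n` a monoid. -/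
noncomputable instance instMonoidPT (n : ℕ) : Monoid (PT n) where
  mul f g := f.trans g
  one := PEquiv.refl (Fin n)
  mul_assoc := PEquiv.trans_assoc
  one_mul := PEquiv.refl_trans
  mul_one := PEquiv.trans_refl

lemma mul_def {n : ℕ} (f g : PT n) : f * g = f.trans g := rfl

/-- The domain of a partial transformation. -/
def pdom {n : ℕ} (f : PT n) : Set (Fin n) := {x | ∃ y, f x = some y}

/-- The image of a partial transformation. -/
def pim {n : ℕ} (f : PT n) : Set (Fin n) := {y | ∃ x, f x = some y}

/-- The height `|im f|` of a partial transformation. -/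
noncomputable def height {n : ℕ} (f : PT n) : ℕ := (pim f).ncard

/-- `f` is order-decreasing: `xf ≤ x` on the domain. -/
def IsDecr {n : ℕ} (f : PT n) : Prop := ∀ x y : Fin n, f x = some y → y ≤ x

/-- `f` is isotone: `x ≤ y` implies `xf ≤ yf` on the domain. -/
def IsIso {n : ℕ} (f : PT n) : Prop :=
  ∀ x₁ x₂ y₁ y₂ : Fin n, f x₁ = some y₁ → f x₂ = some y₂ → x₁ ≤ x₂ → y₁ ≤ y₂

/-- The injective partial Catalan monoid `IC_n`: all isotone order-decreasing
partial injective transformations of `[n]`. -/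
def IC (n : ℕ) : Set (PT n) := {f | IsIso f ∧ IsDecr f}

/-- `Q'_n = {α ∈ IC_n : 1 ∉ dom α}` (the least element of `Fin n` plays the role of `1 ∈ [n]`). -/
def Qp (n : ℕ) : Set (PT n) := {f | f ∈ IC n ∧ ∀ x : Fin n, (x : ℕ) = 0 → f x = none}

/-- `S¹ : S` with an identity adjoined (realized inside `PT n`). -/
def SOne {n : ℕ} (S : Set (PT n)) : Set (PT n) := S ∪ {1}

/-- The starred Green relation `L*` of the subsemigroup `S`. -/
def LStar {n : ℕ} (S : Set (PT n)) (a b : PT n) : Prop :=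
  ∀ x ∈ SOne S, ∀ y ∈ SOne S, (a * x = a * y ↔ b * x = b * y)

/-- The starred Green relation `R*` of the subsemigroup `S`. -/
def RStar {n : ℕ} (S : Set (PT n)) (a b : PT n) : Prop :=
  ∀ x ∈ SOne S, ∀ y ∈ SOne S, (x * a = y * a ↔ x * b = y * b)

/-- The starred Green relation `H* = L* ∩ R*`. -/
def HStar {n : ℕ} (S : Set (PT n)) (a b : PT n) : Prop :=
  LStar S a b ∧ RStar S a b

/-- The partial identity on a subset `A` of `[n]`. -/
noncomputable def pid {n : ℕ} (A : Set (Fin n)) : PT n := PEquiv.ofSet A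

/-- An essential element: exactly one point `y` of the domain is moved, and `yf = y - 1`. -/
def IsEssential {n : ℕ} (f : PT n) : Prop :=
  ∃ y z : Fin n, f y = some z ∧ (z : ℕ) + 1 = (y : ℕ) ∧
    ∀ x w : Fin n, f x = some w → w ≠ x → x = y

/-- The shift of `f`: the number of non-fixed points of its domain. -/
noncomputable def shift {n : ℕ} (f : PT n) : ℕ := {x : Fin n | ∃ w, f x = some w ∧ w ≠ x}.ncard


/-!
The weight `∑ dom α - ∑ im α` of `α ∈ IC_n` is nonnegative, vanishes exactly on partial
identities, and is additive on products `αβ` that keep the height `p` of both factors (these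
have `im α = dom β`). Every element of height `p` and positive weight factors as an essential
element (weight one) times an element of the same height and smaller weight, so the elements
of height `p` and weight at most one generate. Conversely such an element can only be written
as a product of height-`p` elements with one factor equal to it and the others partial
identities, so every generating set contains all of them: the `C(n, p)` partial identities and
the `(n - 1) C(n - 2, p - 1)` essential elements.
-/

open Finset

variable {n : ℕ}

noncomputable instance : Finite (PT n) := Finite.of_injective _ DFunLike.coe_injective

section PartialMaps

variable {f g : PT n} {x y z : Fin n}

def dom (f : PT n) : Finset (Fin n) := univ.filter fun x => (f x).isSome

def ran (f : PT n) : Finset (Fin n) := dom f.symm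

/-- Evaluation, with junk value `x` outside `dom f`. -/
noncomputable def app (f : PT n) (x : Fin n) : Fin n := (f x).getD x

lemma mem_dom : x ∈ dom f ↔ ∃ y, f x = some y := by
  simp [dom, Option.isSome_iff_exists]

lemma mem_ran : y ∈ ran f ↔ ∃ x, f x = some y := by
  simp [ran, mem_dom, PEquiv.eq_some_iff]

lemma apply_eq_some_app (hx : x ∈ dom f) : f x = some (app f x) := by
  obtain ⟨y, hy⟩ := mem_dom.1 hx
  simp [app, hy]

lemma app_eq_of_apply_eq_some (h : f x = some y) : app f x = y := by
  simp [app, h]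

lemma app_injOn (f : PT n) : Set.InjOn (app f) (dom f) := fun _ ha _ hb hab =>
  f.inj (hab ▸ apply_eq_some_app ha) (apply_eq_some_app hb)

lemma ran_eq_image_app (f : PT n) : ran f = (dom f).image (app f) := by
  ext y
  simp only [mem_ran, mem_image]
  constructor
  · rintro ⟨x, hx⟩
    exact ⟨x, mem_dom.2 ⟨y, hx⟩, app_eq_of_apply_eq_some hx⟩
  · rintro ⟨x, hx, rfl⟩
    exact ⟨x, apply_eq_some_app hx⟩

lemma height_eq_card_ran (f : PT n) : height f = #(ran f) := by
  rw [height, ← Set.ncard_coe_finset]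
  congr 1
  ext y
  simp [pim, mem_ran]

lemma height_eq_card_dom (f : PT n) : height f = #(dom f) := by
  rw [height_eq_card_ran, ran_eq_image_app, card_image_of_injOn (app_injOn f)]

lemma mul_apply_eq_some : (f * g) x = some z ↔ ∃ y, f x = some y ∧ g y = some z :=
  f.trans_eq_some g x z

lemma symm_mul (f g : PT n) : (f * g).symm = g.symm * f.symm := PEquiv.symm_trans_rev f g

lemma dom_mul_subset (f g : PT n) : dom (f * g) ⊆ dom f := fun x hx => by
  obtain ⟨z, hz⟩ := mem_dom.1 hx
  obtain ⟨y, hy, -⟩ := mul_apply_eq_some.1 hz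
  exact mem_dom.2 ⟨y, hy⟩

lemma ran_mul_subset (f g : PT n) : ran (f * g) ⊆ ran g := by
  rw [ran, symm_mul]
  exact dom_mul_subset _ _

lemma height_mul_le_left (f g : PT n) : height (f * g) ≤ height f := by
  simpa only [height_eq_card_dom] using card_le_card (dom_mul_subset f g)

lemma height_mul_le_right (f g : PT n) : height (f * g) ≤ height g := by
  simpa only [height_eq_card_ran] using card_le_card (ran_mul_subset f g)

lemma dom_mul_of_ran_subset (h : ran f ⊆ dom g) : dom (f * g) = dom f := by
  refine (dom_mul_subset f g).antisymm fun x hx => ?_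
  obtain ⟨z, hz⟩ := mem_dom.1 (h (mem_ran.2 ⟨x, apply_eq_some_app hx⟩))
  exact mem_dom.2 ⟨z, mul_apply_eq_some.2 ⟨_, apply_eq_some_app hx, hz⟩⟩

lemma ran_mul_of_dom_subset (h : dom g ⊆ ran f) : ran (f * g) = ran g := by
  rw [ran, symm_mul]
  exact dom_mul_of_ran_subset h

lemma height_mul_of_ran_subset (h : ran f ⊆ dom g) : height (f * g) = height f := by
  rw [height_eq_card_dom, dom_mul_of_ran_subset h, height_eq_card_dom]

lemma height_eq_of_ran_eq_dom (h : ran f = dom g) : height f = height g := by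
  rw [height_eq_card_ran, h, height_eq_card_dom]

lemma toPEquiv_mul_apply (e : Equiv.Perm (Fin n)) (f : PT n) (x : Fin n) :
    (e.toPEquiv * f) x = f (e x) := rfl

lemma mem_dom_toPEquiv_mul (e : Equiv.Perm (Fin n)) :
    x ∈ dom (e.toPEquiv * f) ↔ e x ∈ dom f := by
  simp only [mem_dom, toPEquiv_mul_apply]

lemma ran_eq_dom_of_height_mul (hf : height (f * g) = height f) (hg : height (f * g) = height g) :
    ran f = dom g := by
  have hdom : dom (f * g) = dom f :=
    eq_of_subset_of_card_le (dom_mul_subset f g) (by rw [← height_eq_card_dom, ← hf,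
      height_eq_card_dom])
  have hsub : ran f ⊆ dom g := fun y hy => by
    obtain ⟨x, hx⟩ := mem_ran.1 hy
    obtain ⟨z, hz⟩ := mem_dom.1 (hdom ▸ mem_dom.2 ⟨y, hx⟩)
    obtain ⟨y', hy', hz'⟩ := mul_apply_eq_some.1 hz
    exact mem_dom.2 ⟨z, (Option.some_injective _ (hx.symm.trans hy')) ▸ hz'⟩
  exact eq_of_subset_of_card_le hsub
    (by rw [← height_eq_card_dom, ← height_eq_card_ran, ← hf, hg])

end PartialMaps

section Weight

variable {f g : PT n} {x : Fin n}

def weight (f : PT n) : ℤ := ∑ x ∈ dom f, (x : ℤ) - ∑ y ∈ ran f, (y : ℤ)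

lemma weight_eq_sum (f : PT n) : weight f = ∑ x ∈ dom f, ((x : ℤ) - app f x) := by
  rw [weight, ran_eq_image_app, sum_image (app_injOn f), sum_sub_distrib]

lemma weight_mul (h : ran f = dom g) : weight (f * g) = weight f + weight g := by
  rw [weight, weight, weight, dom_mul_of_ran_subset h.le, ran_mul_of_dom_subset h.ge, h]
  ring

lemma app_le (hf : f ∈ IC n) (hx : x ∈ dom f) : app f x ≤ x :=
  hf.2 x _ (apply_eq_some_app hx)

lemma app_le_app (hf : f ∈ IC n) {a b : Fin n} (ha : a ∈ dom f) (hb : b ∈ dom f)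
    (hab : a ≤ b) :
    app f a ≤ app f b :=
  hf.1 a b _ _ (apply_eq_some_app ha) (apply_eq_some_app hb) hab

lemma sub_app_nonneg (hf : f ∈ IC n) (hx : x ∈ dom f) : 0 ≤ (x : ℤ) - app f x := by
  have := Fin.le_def.1 (app_le hf hx)
  omega

lemma weight_nonneg (hf : f ∈ IC n) : 0 ≤ weight f := by
  rw [weight_eq_sum]
  exact sum_nonneg fun x hx => sub_app_nonneg hf hx

lemma app_eq_of_weight_eq_zero (hf : f ∈ IC n) (h : weight f = 0) (hx : x ∈ dom f) :
    app f x = x := by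
  rw [weight_eq_sum] at h
  have := (sum_eq_zero_iff_of_nonneg fun x hx => sub_app_nonneg hf hx).1 h x hx
  omega

lemma mul_mem_IC (hf : f ∈ IC n) (hg : g ∈ IC n) : f * g ∈ IC n := by
  constructor
  · intro x₁ x₂ z₁ z₂ h₁ h₂ hle
    obtain ⟨y₁, hy₁, hz₁⟩ := mul_apply_eq_some.1 h₁
    obtain ⟨y₂, hy₂, hz₂⟩ := mul_apply_eq_some.1 h₂
    exact hg.1 _ _ _ _ hz₁ hz₂ (hf.1 _ _ _ _ hy₁ hy₂ hle)
  · intro x z h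
    obtain ⟨y, hy, hz⟩ := mul_apply_eq_some.1 h
    exact (hg.2 _ _ hz).trans (hf.2 _ _ hy)

lemma one_mem_IC : (1 : PT n) ∈ IC n := by
  constructor
  · rintro x₁ x₂ _ _ ⟨⟩ ⟨⟩ hle
    exact hle
  · rintro x _ ⟨⟩
    exact le_rfl

def icSubmonoid (n : ℕ) : Submonoid (PT n) where
  carrier := IC n
  mul_mem' := mul_mem_IC
  one_mem' := one_mem_IC

end Weight

section PartialIdentity

variable {f : PT n} {T : Finset (Fin n)}

lemma pid_eq_some_iff {x y : Fin n} : pid (T : Set (Fin n)) x = some y ↔ x = y ∧ x ∈ T := by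
  rw [pid, PEquiv.ofSet_eq_some_iff]
  aesop

lemma dom_pid (T : Finset (Fin n)) : dom (pid (T : Set (Fin n))) = T := by
  ext x
  simp [mem_dom, pid_eq_some_iff]

lemma symm_pid (T : Finset (Fin n)) : (pid (T : Set (Fin n))).symm = pid T := by
  ext x y
  rw [PEquiv.eq_some_iff, pid_eq_some_iff, pid_eq_some_iff]
  aesop

lemma ran_pid (T : Finset (Fin n)) : ran (pid (T : Set (Fin n))) = T := by
  rw [ran, symm_pid, dom_pid]

lemma pid_injective : Function.Injective fun T : Finset (Fin n) => pid (T : Set (Fin n)) :=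
  fun S T h => by rw [← dom_pid S, ← dom_pid T]; exact congrArg dom h

lemma pid_mem_IC (T : Finset (Fin n)) : pid (T : Set (Fin n)) ∈ IC n := by
  constructor
  · intro x₁ x₂ y₁ y₂ h₁ h₂ hle
    rw [← (pid_eq_some_iff.1 h₁).1, ← (pid_eq_some_iff.1 h₂).1]
    exact hle
  · intro x y h
    exact (pid_eq_some_iff.1 h).1.ge

lemma weight_pid (T : Finset (Fin n)) : weight (pid (T : Set (Fin n))) = 0 := by
  rw [weight, dom_pid, ran_pid, sub_self]

lemma pid_mul_of_dom_subset (h : dom f ⊆ T) : pid (T : Set (Fin n)) * f = f := by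
  ext x y
  rw [mul_apply_eq_some]
  constructor
  · rintro ⟨x', hx', hy⟩
    rwa [(pid_eq_some_iff.1 hx').1]
  · intro hy
    exact ⟨x, pid_eq_some_iff.2 ⟨rfl, h (mem_dom.2 ⟨y, hy⟩)⟩, hy⟩

lemma mul_pid_of_ran_subset (h : ran f ⊆ T) : f * pid (T : Set (Fin n)) = f := by
  apply PEquiv.symm_injective
  rw [symm_mul, symm_pid]
  exact pid_mul_of_dom_subset h

lemma eq_pid_of_weight_eq_zero (hf : f ∈ IC n) (h : weight f = 0) :
    f = pid (dom f : Set (Fin n)) := by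
  ext x y
  rw [pid_eq_some_iff]
  constructor
  · intro hy
    have hx : x ∈ dom f := mem_dom.2 ⟨y, hy⟩
    exact ⟨(app_eq_of_weight_eq_zero hf h hx).symm.trans (app_eq_of_apply_eq_some hy), hx⟩
  · rintro ⟨rfl, hx⟩
    rw [apply_eq_some_app hx, app_eq_of_weight_eq_zero hf h hx]

end PartialIdentity

lemma _root_.Equiv.swap_apply_le_swap_apply_of_covBy {α : Type*} [LinearOrder α] [DecidableEq α]
    {a b x y : α} (hyx : y ⋖ x) (ha : a ≠ x) (hb : b ≠ x) (hab : a ≤ b) :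
    Equiv.swap x y a ≤ Equiv.swap x y b := by
  by_cases hay : a = y <;> by_cases hby : b = y
  · rw [hay, hby]
  · rw [hay, Equiv.swap_apply_right, Equiv.swap_apply_of_ne_of_ne hb hby]
    exact hyx.ge_of_gt (lt_of_le_of_ne (hay ▸ hab) (Ne.symm (hay ▸ hby)))
  · rw [hby, Equiv.swap_apply_right, Equiv.swap_apply_of_ne_of_ne ha hay]
    exact (hby ▸ hab).trans hyx.le
  · rwa [Equiv.swap_apply_of_ne_of_ne ha hay, Equiv.swap_apply_of_ne_of_ne hb hby]

lemma val_pred_add_one {x : Fin n} (hx : ¬IsMin x) : ((Order.pred x : Fin n) : ℕ) + 1 = x :=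
  Nat.covBy_iff_add_one_eq.1 (Fin.covBy_iff.1 (Order.pred_covBy_of_not_isMin hx))

section Essential

variable {x : Fin n} {T : Finset (Fin n)}

/-- Fixes `T` pointwise and sends `x` to `pred x`. -/
noncomputable def essential (x : Fin n) (T : Finset (Fin n)) : PT n :=
  pid (insert x T : Finset (Fin n)) * (Equiv.swap x (Order.pred x)).toPEquiv

lemma essential_eq_some_iff (hx : x ∉ T) (hpx : Order.pred x ∉ T) {a b : Fin n} :
    essential x T a = some b ↔ a = x ∧ b = Order.pred x ∨ a ∈ T ∧ b = a := by
  simp only [essential, mul_apply_eq_some, pid_eq_some_iff, Equiv.toPEquiv_apply,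
    Option.some_inj, mem_insert]
  constructor
  · rintro ⟨a, ⟨rfl, rfl | ha⟩, rfl⟩
    · exact Or.inl ⟨rfl, Equiv.swap_apply_left _ _⟩
    · exact Or.inr ⟨ha, Equiv.swap_apply_of_ne_of_ne (ne_of_mem_of_not_mem ha hx)
        (ne_of_mem_of_not_mem ha hpx)⟩
  · rintro (⟨rfl, rfl⟩ | ⟨ha, rfl⟩)
    · exact ⟨_, ⟨rfl, Or.inl rfl⟩, Equiv.swap_apply_left _ _⟩
    · exact ⟨_, ⟨rfl, Or.inr ha⟩, Equiv.swap_apply_of_ne_of_ne (ne_of_mem_of_not_mem ha hx)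
        (ne_of_mem_of_not_mem ha hpx)⟩

lemma dom_essential (hx : x ∉ T) (hpx : Order.pred x ∉ T) :
    dom (essential x T) = insert x T := by
  ext a
  simp only [mem_dom, essential_eq_some_iff hx hpx, mem_insert]
  aesop

lemma ran_essential (hx : x ∉ T) (hpx : Order.pred x ∉ T) :
    ran (essential x T) = insert (Order.pred x) T := by
  ext b
  simp only [mem_ran, essential_eq_some_iff hx hpx, mem_insert]
  aesop

lemma height_essential (hx : x ∉ T) (hpx : Order.pred x ∉ T) :
    height (essential x T) = #T + 1 := by
  rw [height_eq_card_ran, ran_essential hx hpx, card_insert_of_notMem hpx]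

lemma weight_essential (hmin : ¬IsMin x) (hx : x ∉ T) (hpx : Order.pred x ∉ T) :
    weight (essential x T) = 1 := by
  have := val_pred_add_one hmin
  rw [weight, dom_essential hx hpx, ran_essential hx hpx, sum_insert hx, sum_insert hpx]
  omega

lemma essential_mem_IC (hmin : ¬IsMin x) (hx : x ∉ T) (hpx : Order.pred x ∉ T) :
    essential x T ∈ IC n := by
  have hpred := Order.pred_covBy_of_not_isMin hmin
  constructor
  · intro a₁ a₂ b₁ b₂ h₁ h₂ hle
    rcases (essential_eq_some_iff hx hpx).1 h₁ with ⟨rfl, rfl⟩ | ⟨ha₁, rfl⟩ <;>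
      rcases (essential_eq_some_iff hx hpx).1 h₂ with ⟨rfl, rfl⟩ | ⟨ha₂, rfl⟩
    · exact le_rfl
    · exact hpred.le.trans hle
    · exact hpred.le_of_lt (lt_of_le_of_ne hle (ne_of_mem_of_not_mem ha₁ hx))
    · exact hle
  · intro a b h
    rcases (essential_eq_some_iff hx hpx).1 h with ⟨rfl, rfl⟩ | ⟨-, rfl⟩
    · exact hpred.le
    · exact le_rfl

lemma essential_injOn :
    Set.InjOn (fun q : (_ : Fin n) × Finset (Fin n) => essential q.1 q.2)
      {q | ¬IsMin q.1 ∧ q.1 ∉ q.2 ∧ Order.pred q.1 ∉ q.2} := by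
  rintro ⟨x, T⟩ ⟨hmin, hx, hpx⟩ ⟨x', T'⟩ ⟨-, hx', hpx'⟩ h
  dsimp only at h hmin hx hpx hx' hpx'
  have hxx' : x = x' := by
    have hsome : essential x' T' x = some (Order.pred x) :=
      h ▸ (essential_eq_some_iff hx hpx).2 (Or.inl ⟨rfl, rfl⟩)
    rcases (essential_eq_some_iff hx' hpx').1 hsome with ⟨h', -⟩ | ⟨-, h'⟩
    · exact h'
    · exact absurd h' (Order.pred_lt_of_not_isMin hmin).ne
  subst hxx'
  have hTT' : insert x T = insert x T' := by
    rw [← dom_essential hx hpx, ← dom_essential hx' hpx', h]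
  rw [← erase_insert hx, ← erase_insert hx', hTT']

end Essential

section Descent

variable {f : PT n} {x : Fin n}

/-- Take `x` least among the points moved by `f`: were `pred x` in `dom f`, it would be fixed,
and isotonicity would force `f x = pred x = f (pred x)`. -/
lemma exists_descent (hf : f ∈ IC n) (hw : weight f ≠ 0) :
    ∃ x ∈ dom f, app f x < x ∧ Order.pred x ∉ dom f := by
  set M := (dom f).filter fun x => app f x ≠ x
  have hM : M.Nonempty := by
    refine nonempty_iff_ne_empty.2 fun hM => hw ?_
    rw [weight_eq_sum]
    refine sum_eq_zero fun x hx => ?_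
    rw [filter_eq_empty_iff] at hM
    rw [not_not.1 (hM hx), sub_self]
  set m := M.min' hM
  obtain ⟨hm, hmoved⟩ := mem_filter.1 (M.min'_mem hM)
  have hlt : app f m < m := lt_of_le_of_ne (app_le hf hm) hmoved
  refine ⟨m, hm, hlt, fun hpm => ?_⟩
  have hpred_lt := Order.pred_lt_of_not_isMin (not_isMin_of_lt hlt)
  have hfix : app f (Order.pred m) = Order.pred m := by
    by_contra h
    exact (M.min'_le _ (mem_filter.2 ⟨hpm, h⟩)).not_gt hpred_lt
  have heq : app f m = Order.pred m :=
    le_antisymm (Order.le_pred_of_lt hlt) (hfix ▸ app_le_app hf hpm hm hpred_lt.le)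
  exact hpred_lt.ne (app_injOn f hpm hm (hfix.trans heq.symm))

lemma essential_mul_swap (hx : x ∈ dom f) :
    essential x ((dom f).erase x) * ((Equiv.swap x (Order.pred x)).toPEquiv * f) = f := by
  have hswap : (Equiv.swap x (Order.pred x)).toPEquiv * (Equiv.swap x (Order.pred x)).toPEquiv
      = 1 := by
    rw [mul_def, ← Equiv.toPEquiv_trans, Equiv.swap_swap, Equiv.toPEquiv_refl]
    rfl
  rw [essential, insert_erase hx, mul_assoc, ← mul_assoc _ _ f, hswap, one_mul,
    pid_mul_of_dom_subset subset_rfl]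

lemma dom_swap_mul (hx : x ∈ dom f) (hpx : Order.pred x ∉ dom f) :
    dom ((Equiv.swap x (Order.pred x)).toPEquiv * f) = insert (Order.pred x) ((dom f).erase x) := by
  have hne : Order.pred x ≠ x := ne_of_mem_of_not_mem hx hpx |>.symm
  ext a
  rw [mem_dom_toPEquiv_mul, mem_insert, mem_erase]
  rcases eq_or_ne a x with rfl | hax
  · simp [hpx, hne.symm]
  rcases eq_or_ne a (Order.pred x) with rfl | hap
  · simp [hx]
  · simp [Equiv.swap_apply_of_ne_of_ne hax hap, hax, hap]

lemma swap_mul_mem_IC (hf : f ∈ IC n) (hlt : app f x < x) (hpx : Order.pred x ∉ dom f) :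
    (Equiv.swap x (Order.pred x)).toPEquiv * f ∈ IC n := by
  have hpred := Order.pred_covBy_of_not_isMin (not_isMin_of_lt hlt)
  have hne : ∀ {a b}, ((Equiv.swap x (Order.pred x)).toPEquiv * f) a = some b → a ≠ x :=
    fun h hax => hpx <| mem_dom.2
      ⟨_, by rwa [hax, toPEquiv_mul_apply, Equiv.swap_apply_left] at h⟩
  constructor
  · intro a₁ a₂ b₁ b₂ h₁ h₂ hle
    exact hf.1 _ _ _ _ h₁ h₂
      (Equiv.swap_apply_le_swap_apply_of_covBy hpred (hne h₁) (hne h₂) hle)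
  · intro a b h
    rcases eq_or_ne a (Order.pred x) with rfl | hap
    · rw [toPEquiv_mul_apply, Equiv.swap_apply_right] at h
      exact Order.le_pred_of_lt (app_eq_of_apply_eq_some h ▸ hlt)
    · have hb := hf.2 _ _ h
      rwa [Equiv.swap_apply_of_ne_of_ne (hne h) hap] at hb

lemma exists_essential_mul (hf : f ∈ IC n) (hw : weight f ≠ 0) :
    ∃ x T g, ¬IsMin x ∧ x ∉ T ∧ Order.pred x ∉ T ∧ g ∈ IC n ∧
      ran (essential x T) = dom g ∧ essential x T * g = f := by
  obtain ⟨x, hx, hlt, hpx⟩ := exists_descent hf hw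
  have hpT : Order.pred x ∉ (dom f).erase x := fun h => hpx (mem_of_mem_erase h)
  refine ⟨x, (dom f).erase x, _, not_isMin_of_lt hlt, notMem_erase x _, hpT,
    swap_mul_mem_IC hf hlt hpx, ?_, essential_mul_swap hx⟩
  rw [ran_essential (notMem_erase x _) hpT, dom_swap_mul hx hpx]

end Descent

section Rank

variable {p : ℕ} {f : PT n}

def generators (n p : ℕ) : Set (PT n) := {f | f ∈ IC n ∧ height f = p ∧ weight f ≤ 1}

lemma mem_closure_generators (hf : f ∈ IC n) :
    f ∈ Subsemigroup.closure (generators n (height f)) := by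
  induction hk : (weight f).toNat using Nat.strong_induction_on generalizing f with
  | _ k ih =>
  by_cases hw : weight f ≤ 1
  · exact Subsemigroup.subset_closure ⟨hf, rfl, hw⟩
  obtain ⟨x, T, g, hmin, hx, hpx, hg, hran, rfl⟩ := exists_essential_mul hf (by omega)
  have hweight := weight_mul hran
  rw [weight_essential hmin hx hpx] at hweight
  rw [height_mul_of_ran_subset hran.le]
  refine mul_mem (Subsemigroup.subset_closure ⟨essential_mem_IC hmin hx hpx, rfl, ?_⟩) ?_
  · rw [weight_essential hmin hx hpx]
  · rw [height_eq_of_ran_eq_dom hran]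
    exact ih _ (by omega) hg rfl

lemma height_le_of_mem_closure {A : Set (PT n)} (hA : ∀ a ∈ A, height a ≤ p)
    (hf : f ∈ Subsemigroup.closure A) : height f ≤ p :=
  Subsemigroup.closure_induction hA (fun a b _ _ ha _ => (height_mul_le_left a b).trans ha) hf

lemma mem_of_mem_closure_of_weight_le_one {A : Set (PT n)}
    (hA : A ⊆ {α | α ∈ IC n ∧ height α = p}) (hf : f ∈ Subsemigroup.closure A)
    (hh : height f = p) (hw : weight f ≤ 1) : f ∈ A := by
  have hIC : ∀ {a}, a ∈ Subsemigroup.closure A → a ∈ IC n := fun ha =>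
    Subsemigroup.closure_le (S := (icSubmonoid n).toSubsemigroup).2 (fun a ha => (hA ha).1) ha
  have hle : ∀ {a}, a ∈ Subsemigroup.closure A → height a ≤ p :=
    height_le_of_mem_closure fun a ha => (hA ha).2.le
  induction hf using Subsemigroup.closure_induction with
  | mem f hf => exact hf
  | mul a b ha hb iha ihb =>
    have hha : height a = p := le_antisymm (hle ha) (hh ▸ height_mul_le_left a b)
    have hhb : height b = p := le_antisymm (hle hb) (hh ▸ height_mul_le_right a b)
    have hab : ran a = dom b := ran_eq_dom_of_height_mul (hh.trans hha.symm) (hh.trans hhb.symm)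
    have hweight := weight_mul hab
    have hb0 := weight_nonneg (hIC hb)
    rcases (weight_nonneg (hIC ha)).eq_or_lt with ha0 | ha0
    · have hpid := eq_pid_of_weight_eq_zero (hIC ha) ha0.symm
      have hab' : a * b = b := by
        rw [hpid, pid_mul_of_dom_subset (by rw [← hab, hpid, ran_pid, dom_pid])]
      rw [hab'] at hh ⊢
      exact ihb hhb (by omega)
    · have hpid := eq_pid_of_weight_eq_zero (hIC hb) (by omega)
      have hab' : a * b = a := by
        rw [hpid, mul_pid_of_ran_subset hab.le]
      rw [hab'] at hh ⊢
      exact iha hha (by omega)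

end Rank

section Count

variable {p : ℕ}

noncomputable def essentialIndex (n p : ℕ) : Finset ((_ : Fin n) × Finset (Fin n)) :=
  (univ.filter fun x => ¬IsMin x).sigma fun x =>
    ({x, Order.pred x}ᶜ : Finset (Fin n)).powersetCard (p - 1)

lemma mem_essentialIndex {q : (_ : Fin n) × Finset (Fin n)} :
    q ∈ essentialIndex n p ↔
      ¬IsMin q.1 ∧ q.1 ∉ q.2 ∧ Order.pred q.1 ∉ q.2 ∧ #q.2 = p - 1 := by
  simp only [essentialIndex, mem_sigma, mem_filter, mem_univ, true_and, mem_powersetCard,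
    subset_iff, mem_compl, mem_insert, mem_singleton]
  refine and_congr_right fun _ => ?_
  rw [← and_assoc]
  refine and_congr_left fun _ =>
    ⟨fun h => ⟨fun hx => h hx (Or.inl rfl), fun hx => h hx (Or.inr rfl)⟩, ?_⟩
  rintro ⟨hx, hpx⟩ a ha (rfl | rfl)
  exacts [hx ha, hpx ha]

lemma card_essentialIndex : #(essentialIndex n p) = (n - 1) * (n - 2).choose (p - 1) := by
  have hfib : ∀ x ∈ univ.filter fun x : Fin n => ¬IsMin x,
      #(({x, Order.pred x}ᶜ : Finset (Fin n)).powersetCard (p - 1)) = (n - 2).choose (p - 1) := by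
    intro x hx
    rw [card_powersetCard, card_compl, Fintype.card_fin,
      card_pair (Order.pred_lt_of_not_isMin (mem_filter.1 hx).2).ne']
  have hcard : #(univ.filter fun x : Fin n => ¬IsMin x) = n - 1 := by
    cases n with
    | zero => simp
    | succ m => simp [isMin_iff_eq_bot, filter_ne']
  rw [essentialIndex, card_sigma, sum_congr rfl hfib, sum_const, smul_eq_mul, hcard]

lemma setOf_weight_eq_zero_eq_image_pid :
    {f : PT n | f ∈ IC n ∧ height f = p ∧ weight f = 0} =
      (fun T : Finset (Fin n) => pid (T : Set (Fin n))) ''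
        ↑(powersetCard p (univ : Finset (Fin n))) := by
  ext f
  simp only [Set.mem_ofPred_eq, Set.mem_image, mem_coe, mem_powersetCard, subset_univ, true_and]
  constructor
  · rintro ⟨hf, hh, hw⟩
    exact ⟨dom f, by rw [← height_eq_card_dom, hh], (eq_pid_of_weight_eq_zero hf hw).symm⟩
  · rintro ⟨T, hT, rfl⟩
    exact ⟨pid_mem_IC T, by rw [height_eq_card_dom, dom_pid, hT], weight_pid T⟩

lemma setOf_weight_eq_one_eq_image_essential (hp : 1 ≤ p) :
    {f : PT n | f ∈ IC n ∧ height f = p ∧ weight f = 1} =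
      (fun q : (_ : Fin n) × Finset (Fin n) => essential q.1 q.2) '' ↑(essentialIndex n p) := by
  ext f
  simp only [Set.mem_ofPred_eq, Set.mem_image, mem_coe, mem_essentialIndex]
  constructor
  · rintro ⟨hf, hh, hw⟩
    obtain ⟨x, T, g, hmin, hx, hpx, hg, hran, rfl⟩ := exists_essential_mul hf (by omega)
    have hg0 : weight g = 0 := by
      have := weight_mul hran
      rw [weight_essential hmin hx hpx] at this
      omega
    have hess : essential x T * g = essential x T := by
      rw [eq_pid_of_weight_eq_zero hg hg0, ← hran, mul_pid_of_ran_subset subset_rfl]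
    rw [hess, height_essential hx hpx] at hh
    exact ⟨⟨x, T⟩, ⟨hmin, hx, hpx, show #T = p - 1 by omega⟩, hess.symm⟩
  · rintro ⟨q, ⟨hmin, hx, hpx, hT⟩, rfl⟩
    exact ⟨essential_mem_IC hmin hx hpx, by rw [height_essential hx hpx]; omega,
      weight_essential hmin hx hpx⟩

lemma ncard_generators (hp : 1 ≤ p) :
    (generators n p).ncard = n.choose p + (n - 1) * (n - 2).choose (p - 1) := by
  have hsplit : generators n p = {f | f ∈ IC n ∧ height f = p ∧ weight f = 0} ∪
      {f | f ∈ IC n ∧ height f = p ∧ weight f = 1} := by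
    ext f
    simp only [generators, Set.mem_union, Set.mem_ofPred_eq]
    constructor
    · rintro ⟨hf, hh, hw⟩
      obtain h | h : weight f = 0 ∨ weight f = 1 := by have := weight_nonneg hf; omega
      exacts [Or.inl ⟨hf, hh, h⟩, Or.inr ⟨hf, hh, h⟩]
    · rintro (⟨hf, hh, hw⟩ | ⟨hf, hh, hw⟩) <;> exact ⟨hf, hh, by omega⟩
  have hdisj : Disjoint {f : PT n | f ∈ IC n ∧ height f = p ∧ weight f = 0}
      {f | f ∈ IC n ∧ height f = p ∧ weight f = 1} :=
    Set.disjoint_left.2 fun f h₀ h₁ => by simp only [Set.mem_ofPred_eq] at h₀ h₁; omega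
  have hinj : Set.InjOn (fun q : (_ : Fin n) × Finset (Fin n) => essential q.1 q.2)
      ↑(essentialIndex n p) := essential_injOn.mono fun q hq => by
    obtain ⟨hmin, hx, hpx, -⟩ := mem_essentialIndex.1 hq
    exact ⟨hmin, hx, hpx⟩
  rw [hsplit, Set.ncard_union_eq hdisj, setOf_weight_eq_zero_eq_image_pid,
    setOf_weight_eq_one_eq_image_essential hp, Set.ncard_image_of_injective _ pid_injective,
    hinj.ncard_image, Set.ncard_coe_finset, Set.ncard_coe_finset, card_powersetCard, card_univ,
    Fintype.card_fin, card_essentialIndex]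

end Count

theorem stmt15_general (n p : ℕ) (hp1 : 1 ≤ p) :
    IsLeast
      {k : ℕ | ∃ A : Set (PT n),
        A ⊆ {α | α ∈ IC n ∧ height α = p} ∧
        {α | α ∈ IC n ∧ height α = p} ⊆ ↑(Subsemigroup.closure A) ∧
        A.ncard = k}
      (Nat.choose n p + (n - 1) * Nat.choose (n - 2) (p - 1)) := by
  rw [← ncard_generators hp1]
  refine ⟨⟨generators n p, fun f hf => ⟨hf.1, hf.2.1⟩, fun f hf => ?_, rfl⟩, ?_⟩
  · exact hf.2 ▸ mem_closure_generators hf.1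
  · rintro _ ⟨A, hA, hgen, rfl⟩
    exact Set.ncard_le_ncard (fun f hf => mem_of_mem_closure_of_weight_le_one hA
      (hgen ⟨hf.1, hf.2.1⟩) hf.2.1 hf.2.2) (Set.toFinite A)

/-- for `1 ≤ p ≤ n-1`, the least cardinality of a set
`A ⊆ {α ∈ IC_n : |im α| = p}` such that every element of `IC_n` of height `p` is a
finite product of elements of `A` equals `C(n,p) + (n-1)·C(n-2,p-1)`
(the rank of the Rees quotient `RIC_n(p)`). -/
theorem stmt15 (n p : ℕ) (hp1 : 1 ≤ p) (hpn : p ≤ n - 1) (hn : 0 < n) :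
    IsLeast
      {k : ℕ | ∃ A : Set (PT n),
        A ⊆ {α | α ∈ IC n ∧ height α = p} ∧
        {α | α ∈ IC n ∧ height α = p} ⊆ ↑(Subsemigroup.closure A) ∧
        A.ncard = k}
      (Nat.choose n p + (n - 1) * Nat.choose (n - 2) (p - 1)) :=
  stmt15_general n p hp1

end ICCatalan
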